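/- Let χ : Fbr → ℝ be a group homomorphism that vanishes on Pbr and satisfies χ(x_1) ≠ 0 and χ(x_0) ≠ χ(x_1) (equivalently, a character of Fbr killing Pbr whose φ0- and φ1-components are both nonzero). Then for every finite generating set S of Fbr, the full subgraph of the Cayley graph Γ(Fbr,S) spanned by {g ∈ Fbr : χ(g) ≥ 0} is connected; that is, [χ] ∈ Σ¹(Fbr). -/

import Mathlib

namespace BrThompson

/-- Generators of the braided Thompson group `Fbr`: `x i` for `i ≥ 0`,
and `a i j`, `b i j` (the α- and β-generators) for `1 ≤ i < j`. -/
inductive FbrGen : Type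
  | x : ℕ → FbrGen
  | a : (i j : ℕ) → 1 ≤ i → i < j → FbrGen
  | b : (i j : ℕ) → 1 ≤ i → i < j → FbrGen

/-- The generator `x i` as an element of the free group. -/
def xg (i : ℕ) : FreeGroup FbrGen := FreeGroup.of (FbrGen.x i)

/-- The generator `α i j` as an element of the free group (junk value `1` for invalid indices). -/
def ag (i j : ℕ) : FreeGroup FbrGen :=
  if h : 1 ≤ i ∧ i < j then FreeGroup.of (FbrGen.a i j h.1 h.2) else 1

/-- The generator `β i j` as an element of the free group (junk value `1` for invalid indices). -/
def bg (i j : ℕ) : FreeGroup FbrGen :=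
  if h : 1 ≤ i ∧ i < j then FreeGroup.of (FbrGen.b i j h.1 h.2) else 1

/-- The defining relations of `Fbr`, each written as a word that is set equal to `1`,
namely `u * v⁻¹` for a relation `u = v`. -/
inductive IsFbrRel : FreeGroup FbrGen → Prop
  | relA (i j : ℕ) (h : i < j) :
      IsFbrRel (xg j * xg i * (xg i * xg (j + 1))⁻¹)
  | relB1a (r s i j : ℕ) (h0 : 1 ≤ r) (h1 : r < s) (h2 : s < i) (h3 : i < j) :
      IsFbrRel ((ag r s)⁻¹ * ag i j * ag r s * (ag i j)⁻¹)
  | relB1b (i r s j : ℕ) (h0 : 1 ≤ i) (h1 : i < r) (h2 : r < s) (h3 : s < j) :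
      IsFbrRel ((ag r s)⁻¹ * ag i j * ag r s * (ag i j)⁻¹)
  | relB2 (r i j : ℕ) (h0 : 1 ≤ r) (h1 : r < i) (h2 : i < j) :
      IsFbrRel ((ag r i)⁻¹ * ag i j * ag r i * (ag r j * ag i j * (ag r j)⁻¹)⁻¹)
  | relB3 (i s j : ℕ) (h0 : 1 ≤ i) (h1 : i < s) (h2 : s < j) :
      IsFbrRel ((ag i s)⁻¹ * ag i j * ag i s *
        (ag i j * ag s j * ag i j * (ag i j * ag s j)⁻¹)⁻¹)
  | relB4 (r i s j : ℕ) (h0 : 1 ≤ r) (h1 : r < i) (h2 : i < s) (h3 : s < j) :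
      IsFbrRel ((ag r s)⁻¹ * ag i j * ag r s *
        (ag r j * ag s j * (ag r j)⁻¹ * (ag s j)⁻¹ * ag i j *
          (ag r j * ag s j * (ag r j)⁻¹ * (ag s j)⁻¹)⁻¹)⁻¹)
  | relB5a (r s i j : ℕ) (h0 : 1 ≤ r) (h1 : r < s) (h2 : s < i) (h3 : i < j) :
      IsFbrRel ((ag r s)⁻¹ * bg i j * ag r s * (bg i j)⁻¹)
  | relB5b (i r s j : ℕ) (h0 : 1 ≤ i) (h1 : i < r) (h2 : r < s) (h3 : s < j) :
      IsFbrRel ((ag r s)⁻¹ * bg i j * ag r s * (bg i j)⁻¹)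
  | relB6 (r i j : ℕ) (h0 : 1 ≤ r) (h1 : r < i) (h2 : i < j) :
      IsFbrRel ((ag r i)⁻¹ * bg i j * ag r i * (bg r j * bg i j * (bg r j)⁻¹)⁻¹)
  | relB7 (i s j : ℕ) (h0 : 1 ≤ i) (h1 : i < s) (h2 : s < j) :
      IsFbrRel ((ag i s)⁻¹ * bg i j * ag i s *
        (bg i j * bg s j * bg i j * (bg i j * bg s j)⁻¹)⁻¹)
  | relB8 (r i s j : ℕ) (h0 : 1 ≤ r) (h1 : r < i) (h2 : i < s) (h3 : s < j) :
      IsFbrRel ((ag r s)⁻¹ * bg i j * ag r s *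
        (bg r j * bg s j * (bg r j)⁻¹ * (bg s j)⁻¹ * bg i j *
          (bg r j * bg s j * (bg r j)⁻¹ * (bg s j)⁻¹)⁻¹)⁻¹)
  | relC (i j : ℕ) (h0 : 1 ≤ i) (h1 : i < j) :
      IsFbrRel (bg i j * (bg i (j + 1) * ag i j)⁻¹)
  | relD1 (k i j : ℕ) (h0 : 1 ≤ k) (h1 : k < i) (h2 : i < j) :
      IsFbrRel (ag i j * xg (k - 1) * (xg (k - 1) * ag (i + 1) (j + 1))⁻¹)
  | relD2 (i j : ℕ) (h0 : 1 ≤ i) (h1 : i < j) :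
      IsFbrRel (ag i j * xg (i - 1) * (xg (i - 1) * ag (i + 1) (j + 1) * ag i (j + 1))⁻¹)
  | relD3 (i k j : ℕ) (h0 : 1 ≤ i) (h1 : i < k) (h2 : k < j) :
      IsFbrRel (ag i j * xg (k - 1) * (xg (k - 1) * ag i (j + 1))⁻¹)
  | relD4 (i j : ℕ) (h0 : 1 ≤ i) (h1 : i < j) :
      IsFbrRel (ag i j * xg (j - 1) * (xg (j - 1) * ag i (j + 1) * ag i j)⁻¹)
  | relD5 (i j k : ℕ) (h0 : 1 ≤ i) (h1 : i < j) (h2 : j < k) :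
      IsFbrRel (ag i j * xg (k - 1) * (xg (k - 1) * ag i j)⁻¹)
  | relD6 (k i j : ℕ) (h0 : 1 ≤ k) (h1 : k < i) (h2 : i < j) :
      IsFbrRel (bg i j * xg (k - 1) * (xg (k - 1) * bg (i + 1) (j + 1))⁻¹)
  | relD7 (i j : ℕ) (h0 : 1 ≤ i) (h1 : i < j) :
      IsFbrRel (bg i j * xg (i - 1) * (xg (i - 1) * bg (i + 1) (j + 1) * bg i (j + 1))⁻¹)
  | relD8 (i k j : ℕ) (h0 : 1 ≤ i) (h1 : i < k) (h2 : k < j) :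
      IsFbrRel (bg i j * xg (k - 1) * (xg (k - 1) * bg i (j + 1))⁻¹)
  | relD9 (i j k : ℕ) (h0 : 1 ≤ i) (h1 : i < j) (h2 : j < k) :
      IsFbrRel (bg i j * xg (k - 1) * (xg (k - 1) * bg i j)⁻¹)

def fbrRels : Set (FreeGroup FbrGen) := {r | IsFbrRel r}

/-- The braided Thompson group `Fbr` of Brady–Burillo–Cleary–Stein. -/
abbrev Fbr : Type := PresentedGroup fbrRels

/-- The generator `x i` of `Fbr`. -/
def x (i : ℕ) : Fbr := PresentedGroup.of (FbrGen.x i)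

/-- The generator `α i j` of `Fbr` (junk value `1` for invalid indices). -/
def al (i j : ℕ) : Fbr :=
  if h : 1 ≤ i ∧ i < j then PresentedGroup.of (FbrGen.a i j h.1 h.2) else 1

/-- The generator `β i j` of `Fbr` (junk value `1` for invalid indices). -/
def be (i j : ℕ) : Fbr :=
  if h : 1 ≤ i ∧ i < j then PresentedGroup.of (FbrGen.b i j h.1 h.2) else 1

/-- The defining relations of Thompson's group `F`. -/
inductive IsThFRel : FreeGroup ℕ → Prop
  | relA (i j : ℕ) (h : i < j) :
      IsThFRel (FreeGroup.of j * FreeGroup.of i * (FreeGroup.of i * FreeGroup.of (j + 1))⁻¹)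

def thfRels : Set (FreeGroup ℕ) := {r | IsThFRel r}

/-- Thompson's group `F`. -/
abbrev ThF : Type := PresentedGroup thfRels

/-- The generator `x i` of Thompson's group `F`. -/
def fX (i : ℕ) : ThF := PresentedGroup.of i

/-- `π : Fbr →* F` is the natural projection: it sends `x i` to `x i` and
all α- and β-generators to `1`. `Pbr` is its kernel. -/
def PiSpec (π : Fbr →* ThF) : Prop :=
  (∀ i, π (x i) = fX i) ∧
  (∀ i j, 1 ≤ i → i < j → π (al i j) = 1) ∧
  (∀ i j, 1 ≤ i → i < j → π (be i j) = 1)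

/-- A character of `Fbr`: a homomorphism to the additive reals. -/
def IsChar (χ : Fbr → ℝ) : Prop := ∀ g h : Fbr, χ (g * h) = χ g + χ h

/-- The character `φ0` of `Fbr`. -/
def Phi0Spec (φ : Fbr → ℝ) : Prop :=
  IsChar φ ∧ φ (x 0) = -1 ∧ (∀ i, 1 ≤ i → φ (x i) = 0) ∧
  (∀ i j, 1 ≤ i → i < j → φ (al i j) = 0) ∧ (∀ i j, 1 ≤ i → i < j → φ (be i j) = 0)

/-- The character `φ1` of `Fbr`. -/
def Phi1Spec (φ : Fbr → ℝ) : Prop :=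
  IsChar φ ∧ (∀ i, φ (x i) = -1) ∧
  (∀ i j, 1 ≤ i → i < j → φ (al i j) = 0) ∧ (∀ i j, 1 ≤ i → i < j → φ (be i j) = 0)

/-- The full subgraph of the Cayley graph `Γ(G,S)` spanned by the vertices satisfying `P`. -/
def cayleySubgraph {G : Type*} [Group G] (S : Finset G) (P : G → Prop) :
    SimpleGraph {g : G // P g} where
  Adj a b := a ≠ b ∧ ∃ s ∈ S, (b : G) = (a : G) * s ∨ (a : G) = (b : G) * s
  symm := by
    constructor
    rintro a b ⟨hne, s, hs, h⟩
    exact ⟨hne.symm, s, hs, h.symm⟩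
  loopless := by constructor; rintro a ⟨h, -⟩; exact h rfl

/-!
A character `χ` lies in `Σ¹` as soon as there is a constant `c` such that every `g` with
`χ g ≥ 0` is joined to `1` by a path of `Γ(G,S)` staying at height `≥ c`: conjugating such
a path by a large power of an element of positive height lifts it into the half-space `χ ≥ 0`.

In `Fbr` every element `v` satisfies `v * x (m + p + 1) = x (m + q + 1) * v` for some `p`,
`q` and all `m` (relations (A), (D5), (D9)), and `χ (x i) = χ (x 1) ≠ 0` for `i ≥ 1`. Hence
`v = x (q + 1) ^ k * v * (x (p + 1) ^ k)⁻¹` (or the same with inverses), which for large `k`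
lifts any path to `v`, provided the `x (n + 1)` have paths with a common lower bound.
These come from `x (n + 1) = (x 0 ^ n)⁻¹ * x 1 * x 0 ^ n` when `χ (x 0) ≤ 0`; otherwise
conjugate by a power of `x 0 * (x 1)⁻¹` or of its inverse, which commutes with every `x j`,
`j ≥ 2`, and has height `± (χ (x 0) - χ (x 1)) ≠ 0`.
-/

section Levels

variable {G : Type*} [Group G]

def AboveStep (χ : G → ℝ) (S : Set G) (c : ℝ) (a b : G) : Prop :=
  c ≤ χ a ∧ c ≤ χ b ∧ ∃ s ∈ S, b = a * s ∨ a = b * s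

/-- `ReachAbove χ S c 1 g` says that `g` has a word over `S ∪ S⁻¹` all of whose prefixes
have `χ ≥ c`. -/
def ReachAbove (χ : G → ℝ) (S : Set G) (c : ℝ) : G → G → Prop :=
  Relation.ReflTransGen (AboveStep χ S c)

variable {χ : G → ℝ} {S : Set G} {c c' : ℝ} {a b g u w w' : G}

lemma AboveStep.symm (hab : AboveStep χ S c a b) : AboveStep χ S c b a :=
  ⟨hab.2.1, hab.1, hab.2.2.imp fun _ ⟨hs, h⟩ ↦ ⟨hs, h.symm⟩⟩

namespace ReachAbove

lemma mono (hc : c' ≤ c) (hab : ReachAbove χ S c a b) : ReachAbove χ S c' a b :=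
  Relation.ReflTransGen.mono
    (fun _ _ ⟨ha, hb, hs⟩ ↦ ⟨hc.trans ha, hc.trans hb, hs⟩) _ _ hab

lemma symm (hab : ReachAbove χ S c a b) : ReachAbove χ S c b a :=
  Relation.ReflTransGen.mono (fun _ _ ↦ AboveStep.symm) _ _
    (Relation.reflTransGen_swap.mpr hab)

lemma trans (hab : ReachAbove χ S c a b) (hbg : ReachAbove χ S c b g) :
    ReachAbove χ S c a g :=
  Relation.ReflTransGen.trans hab hbg

end ReachAbove

section Character

variable (hχ : ∀ g h : G, χ (g * h) = χ g + χ h)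
include hχ

lemma char_one : χ 1 = 0 := by
  simpa using hχ 1 1

lemma char_inv (g : G) : χ g⁻¹ = -χ g := by
  linarith [hχ g⁻¹ g, inv_mul_cancel g ▸ char_one hχ]

lemma char_pow (g : G) (n : ℕ) : χ (g ^ n) = n * χ g := by
  induction n with
  | zero => simpa using char_one hχ
  | succ n ih => rw [pow_succ, hχ, ih]; push_cast; ring

namespace ReachAbove

lemma mul_left (g : G) (hab : ReachAbove χ S c a b) :
    ReachAbove χ S (χ g + c) (g * a) (g * b) := by
  refine Relation.ReflTransGen.lift (g * ·)
    (fun a b ⟨ha, hb, s, hs, hab⟩ ↦ ⟨?_, ?_, s, hs, ?_⟩) _ _ hab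
  · rw [hχ]; linarith
  · rw [hχ]; linarith
  · rcases hab with rfl | rfl
    exacts [Or.inl (mul_assoc _ _ _).symm, Or.inr (mul_assoc _ _ _).symm]

lemma of_mem (hs : u ∈ S) : ReachAbove χ S (min 0 (χ u)) 1 u := by
  refine Relation.ReflTransGen.single ⟨?_, min_le_right _ _, u, hs, Or.inl (one_mul u).symm⟩
  rw [char_one hχ]; exact min_le_left _ _

lemma mul (hu : ReachAbove χ S c 1 u) (hw : ReachAbove χ S c' 1 w) :
    ReachAbove χ S (min c (χ u + c')) 1 (u * w) := by
  have hw' := hw.mul_left hχ u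
  rw [mul_one] at hw'
  exact (hu.mono (min_le_left _ _)).trans (hw'.mono (min_le_right _ _))

lemma inv (hu : ReachAbove χ S c 1 u) : ReachAbove χ S (c - χ u) 1 u⁻¹ := by
  have h := (hu.mul_left hχ u⁻¹).symm
  rwa [mul_one, inv_mul_cancel, char_inv hχ, neg_add_eq_sub] at h

lemma pow (hu : ReachAbove χ S c 1 u) (n : ℕ) :
    ReachAbove χ S (c + n * min 0 (χ u)) 1 (u ^ n) := by
  induction n with
  | zero => rw [pow_zero]; exact Relation.ReflTransGen.refl
  | succ n ih =>
    rw [pow_succ]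
    refine (ih.mul hχ hu).mono (le_min ?_ ?_)
    · push_cast; nlinarith [min_le_left 0 (χ u)]
    · rw [char_pow hχ]; push_cast; nlinarith [min_le_left 0 (χ u), min_le_right 0 (χ u)]

lemma pow_of_nonneg (hu : ReachAbove χ S c 1 u) (hχu : 0 ≤ χ u) (n : ℕ) :
    ReachAbove χ S c 1 (u ^ n) := by
  simpa [min_eq_left hχu] using hu.pow hχ n

lemma pow_mul_mul_inv_pow (hw : ReachAbove χ S c 1 w) (hw' : ReachAbove χ S c 1 w')
    (hww' : χ w = χ w') (hpos : 0 < χ w) (hg : ReachAbove χ S c' 1 g) {k : ℕ}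
    (hk : c ≤ k * χ w + c') :
    ReachAbove χ S (min c (χ g + c)) 1 (w ^ k * g * (w' ^ k)⁻¹) := by
  have h := ((hw.pow_of_nonneg hχ hpos.le k).mul hχ hg).mul hχ
    ((hw'.pow_of_nonneg hχ (hww' ▸ hpos.le) k).inv hχ)
  rw [hχ, char_pow hχ, char_pow hχ, ← hww'] at h
  exact h.mono (le_min (le_min (min_le_left _ _) (by linarith [min_le_left c (χ g + c)]))
    (by linarith [min_le_right c (χ g + c)]))

lemma of_semiconjBy (hw : ReachAbove χ S c 1 w) (hw' : ReachAbove χ S c 1 w')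
    (hww' : χ w = χ w') (hpos : 0 < χ w) (hgw : SemiconjBy g w' w)
    (hg : ReachAbove χ S c' 1 g) : ReachAbove χ S (min c (χ g + c)) 1 g := by
  obtain ⟨k, hk⟩ := Archimedean.arch (c - c') hpos
  rw [nsmul_eq_mul] at hk
  have h := hw.pow_mul_mul_inv_pow hχ hw' hww' hpos hg (k := k) (by linarith)
  rwa [← (hgw.pow_right k).eq, mul_inv_cancel_right] at h

lemma exists_of_mem_closure (hg : g ∈ Subgroup.closure S) : ∃ c, ReachAbove χ S c 1 g := by
  induction hg using Subgroup.closure_induction with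
  | mem u hu => exact ⟨_, of_mem hχ hu⟩
  | one => exact ⟨0, Relation.ReflTransGen.refl⟩
  | mul u w _ _ hu hw =>
    obtain ⟨c, hu⟩ := hu
    obtain ⟨c', hw⟩ := hw
    exact ⟨_, hu.mul hχ hw⟩
  | inv u _ hu =>
    obtain ⟨c, hu⟩ := hu
    exact ⟨_, hu.inv hχ⟩

lemma exists_pos_of_mem_closure (hg : g ∈ Subgroup.closure S) (hg0 : χ g ≠ 0) :
    ∃ σ, ReachAbove χ S 0 1 σ ∧ 0 < χ σ := by
  obtain ⟨s, hs, hs0⟩ : ∃ s ∈ S, χ s ≠ 0 := by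
    by_contra! hS0
    refine hg0 ?_
    clear hg0
    induction hg using Subgroup.closure_induction with
    | mem u hu => exact hS0 u hu
    | one => exact char_one hχ
    | mul u w _ _ hu hw => rw [hχ, hu, hw, add_zero]
    | inv u _ hu => rw [char_inv hχ, hu, neg_zero]
  rcases hs0.lt_or_gt with hneg | hpos
  · refine ⟨s⁻¹, ?_, by rw [char_inv hχ]; linarith⟩
    simpa [min_eq_right hneg.le] using (of_mem hχ hs).inv hχ
  · exact ⟨s, by simpa [min_eq_left hpos.le] using of_mem hχ hs, hpos⟩

end ReachAbove

end Character

lemma reachable_cayleySubgraph_of_reachAbove {S : Finset G} {a b : G}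
    (hab : ReachAbove χ S 0 a b) (ha : 0 ≤ χ a) (hb : 0 ≤ χ b) :
    (cayleySubgraph S (fun g => 0 ≤ χ g)).Reachable ⟨a, ha⟩ ⟨b, hb⟩ := by
  induction hab with
  | refl => rfl
  | @tail b' b _ hstep ih =>
    refine (ih hstep.1).trans ?_
    obtain ⟨-, -, s, hs, hss⟩ := hstep
    by_cases hbb : b' = b
    · subst hbb; rfl
    · exact SimpleGraph.Adj.reachable ⟨fun h ↦ hbb (congrArg Subtype.val h), s, hs, hss⟩

theorem connected_cayleySubgraph_of_reachAbove (hχ : ∀ g h : G, χ (g * h) = χ g + χ h)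
    {S : Finset G} {σ : G} (hσ : ReachAbove χ S 0 1 σ) (hσpos : 0 < χ σ)
    (hc : ∀ g, 0 ≤ χ g → ReachAbove χ S c 1 g) :
    (cayleySubgraph S (fun g => 0 ≤ χ g)).Connected := by
  obtain ⟨k, hk⟩ := Archimedean.arch (-c) hσpos
  rw [nsmul_eq_mul] at hk
  have hone : 0 ≤ χ 1 := (char_one hχ).ge
  refine (SimpleGraph.connected_iff_exists_forall_reachable _).mpr ⟨⟨1, hone⟩, ?_⟩
  rintro ⟨g, hg⟩
  set v := (σ ^ k)⁻¹ * g * σ ^ k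
  have hv : χ v = χ g := by
    simp only [v, hχ, char_inv hχ]; ring
  have h := hσ.pow_mul_mul_inv_pow hχ hσ rfl hσpos (hc v (hv ▸ hg)) (k := k) (by linarith)
  rw [show σ ^ k * v * (σ ^ k)⁻¹ = g by simp only [v]; group, hv, add_zero,
    min_eq_left hg] at h
  exact reachable_cayleySubgraph_of_reachAbove h hone hg

end Levels

section Relations

lemma mk_xg (i : ℕ) : PresentedGroup.mk fbrRels (xg i) = x i := rfl

lemma mk_ag {i j : ℕ} (h0 : 1 ≤ i) (h1 : i < j) :
    PresentedGroup.mk fbrRels (ag i j) = al i j := by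
  simp only [ag, al, dif_pos (And.intro h0 h1)]; rfl

lemma mk_bg {i j : ℕ} (h0 : 1 ≤ i) (h1 : i < j) :
    PresentedGroup.mk fbrRels (bg i j) = be i j := by
  simp only [bg, be, dif_pos (And.intro h0 h1)]; rfl

lemma mk_eq_mk_of_rel {u v : FreeGroup FbrGen} (h : IsFbrRel (u * v⁻¹)) :
    PresentedGroup.mk fbrRels u = PresentedGroup.mk fbrRels v :=
  PresentedGroup.mk_eq_mk_of_mul_inv_mem h

lemma x_mul_x {i j : ℕ} (h : i < j) : x j * x i = x i * x (j + 1) := by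
  simpa only [map_mul, mk_xg] using mk_eq_mk_of_rel (IsFbrRel.relA i j h)

lemma commute_al_x {i j m : ℕ} (h0 : 1 ≤ i) (h1 : i < j) (hm : j ≤ m) :
    Commute (al i j) (x m) := by
  have h := mk_eq_mk_of_rel (IsFbrRel.relD5 i j (m + 1) h0 h1 (by omega))
  simp only [map_mul, mk_xg, mk_ag h0 h1, Nat.add_sub_cancel] at h
  exact h

lemma commute_be_x {i j m : ℕ} (h0 : 1 ≤ i) (h1 : i < j) (hm : j ≤ m) :
    Commute (be i j) (x m) := by
  have h := mk_eq_mk_of_rel (IsFbrRel.relD9 i j (m + 1) h0 h1 (by omega))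
  simp only [map_mul, mk_xg, mk_bg h0 h1, Nat.add_sub_cancel] at h
  exact h

lemma x_succ_eq_conj (n : ℕ) : x (n + 1) = (x 0 ^ n)⁻¹ * x 1 * x 0 ^ n := by
  induction n with
  | zero => simp
  | succ n ih =>
    rw [eq_inv_mul_of_mul_eq (x_mul_x n.succ_pos).symm, ih]
    group

lemma commute_x0_mul_inv_x1 {j : ℕ} (hj : 2 ≤ j) : Commute (x 0 * (x 1)⁻¹) (x j) := by
  have h0 := x_mul_x (show 0 < j by omega)
  have h1 := x_mul_x (show 1 < j by omega)
  have h1' : (x 1)⁻¹ * x j = x (j + 1) * (x 1)⁻¹ := by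
    rw [inv_mul_eq_iff_eq_mul, ← mul_assoc, ← h1, mul_inv_cancel_right]
  show x 0 * (x 1)⁻¹ * x j = x j * (x 0 * (x 1)⁻¹)
  rw [mul_assoc, h1', ← mul_assoc, ← h0, mul_assoc]

end Relations

def ShiftsTail (v : Fbr) (p q : ℕ) : Prop := ∀ m, SemiconjBy v (x (m + p + 1)) (x (m + q + 1))

namespace ShiftsTail

lemma one : ShiftsTail 1 0 0 := fun _ ↦ SemiconjBy.one_left _

lemma mul {v w : Fbr} {p q p' q' : ℕ} (hv : ShiftsTail v p q) (hw : ShiftsTail w p' q') :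
    ShiftsTail (v * w) (p + p') (q + q') := fun m ↦ by
  have hw' := hw (m + p)
  rw [add_right_comm m p q'] at hw'
  have h := (hv (m + q')).mul_left hw'
  rwa [add_assoc m p p', add_right_comm m q' q, add_assoc m q q'] at h

lemma inv {v : Fbr} {p q : ℕ} (hv : ShiftsTail v p q) : ShiftsTail v⁻¹ q p :=
  fun m ↦ (hv m).inv_symm_left

lemma of_gen (t : FbrGen) : ∃ p q, ShiftsTail (PresentedGroup.of t) p q := by
  cases t with
  | x i =>
    exact ⟨i + 1, i, fun m ↦ (x_mul_x (show i < m + i + 1 by omega)).symm⟩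
  | a i j h0 h1 =>
    refine ⟨j, j, fun m ↦ ?_⟩
    rw [← show al i j = _ from dif_pos ⟨h0, h1⟩]
    exact commute_al_x h0 h1 (by omega)
  | b i j h0 h1 =>
    refine ⟨j, j, fun m ↦ ?_⟩
    rw [← show be i j = _ from dif_pos ⟨h0, h1⟩]
    exact commute_be_x h0 h1 (by omega)

lemma exists_shiftsTail (v : Fbr) : ∃ p q, ShiftsTail v p q := by
  have hv : v ∈ Subgroup.closure (Set.range PresentedGroup.of) := by
    rw [PresentedGroup.closure_range_of]; trivial
  induction hv using Subgroup.closure_induction with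
  | mem _ ht => obtain ⟨t, rfl⟩ := ht; exact of_gen t
  | one => exact ⟨0, 0, one⟩
  | mul v w _ _ hv hw =>
    obtain ⟨p, q, hv⟩ := hv
    obtain ⟨p', q', hw⟩ := hw
    exact ⟨_, _, hv.mul hw⟩
  | inv v _ hv =>
    obtain ⟨p, q, hv⟩ := hv
    exact ⟨_, _, hv.inv⟩

end ShiftsTail

section Character

variable {χ : Fbr → ℝ} {S : Set Fbr}

lemma IsChar.map_x (hχ : IsChar χ) {i : ℕ} (hi : 1 ≤ i) : χ (x i) = χ (x 1) := by
  induction i, hi using Nat.le_induction with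
  | base => rfl
  | succ i hi ih =>
    have h := congrArg χ (x_mul_x (show 0 < i by omega))
    rw [hχ, hχ] at h
    linarith

lemma reachAbove_x_succ (hχ : IsChar χ) {c₀ c₁ : ℝ} (h0 : ReachAbove χ S c₀ 1 (x 0))
    (h1 : ReachAbove χ S c₁ 1 (x 1)) (n : ℕ) :
    ReachAbove χ S (min (min c₀ c₁) (χ (x 1) + c₀) - n * max (χ (x 0)) 0) 1
      (x (n + 1)) := by
  have h := (((h0.pow hχ n).inv hχ).mul hχ h1).mul hχ (h0.pow hχ n)
  rw [← x_succ_eq_conj] at h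
  refine h.mono ?_
  rw [hχ]
  simp only [char_inv hχ, char_pow hχ]
  have hK := min_le_left (min c₀ c₁) (χ (x 1) + c₀)
  have hK' := min_le_right (min c₀ c₁) (χ (x 1) + c₀)
  have hc₀ := min_le_left c₀ c₁
  have hc₁ := min_le_right c₀ c₁
  rcases le_total (χ (x 0)) 0 with ha | ha
  · have hna : (n : ℝ) * χ (x 0) ≤ 0 := mul_nonpos_of_nonneg_of_nonpos n.cast_nonneg ha
    rw [max_eq_right ha, min_eq_right ha]
    refine le_min (le_min ?_ ?_) ?_ <;> linarith
  · rw [max_eq_left ha, min_eq_left ha]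
    refine le_min (le_min ?_ ?_) ?_ <;> linarith

lemma exists_reachAbove_x_succ (hχ : IsChar χ) (hx01 : χ (x 0) ≠ χ (x 1))
    (hS : Subgroup.closure S = ⊤) : ∃ c, ∀ n, ReachAbove χ S c 1 (x (n + 1)) := by
  have hreach (g : Fbr) := ReachAbove.exists_of_mem_closure hχ (hS ▸ Subgroup.mem_top g)
  obtain ⟨c₀, h0⟩ := hreach (x 0)
  obtain ⟨c₁, h1⟩ := hreach (x 1)
  have htower := reachAbove_x_succ hχ h0 h1
  set K := min (min c₀ c₁) (χ (x 1) + c₀)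
  rcases le_or_gt (χ (x 0)) 0 with ha | ha
  · exact ⟨K, fun n ↦ by simpa [max_eq_right ha] using htower n⟩
  obtain ⟨w, hwpos, hw⟩ : ∃ w, 0 < χ w ∧ ∀ j, 2 ≤ j → Commute w (x j) := by
    have ht : χ (x 0 * (x 1)⁻¹) = χ (x 0) - χ (x 1) := by rw [hχ, char_inv hχ]; ring
    rcases hx01.lt_or_gt with hlt | hgt
    · exact ⟨(x 0 * (x 1)⁻¹)⁻¹, by rw [char_inv hχ, ht]; linarith,
        fun j hj ↦ (commute_x0_mul_inv_x1 hj).inv_left⟩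
    · exact ⟨x 0 * (x 1)⁻¹, by rw [ht]; linarith, fun j hj ↦ commute_x0_mul_inv_x1 hj⟩
  obtain ⟨c, hc⟩ := hreach w
  refine ⟨min K (min c (χ (x 1) + c)), fun n ↦ ?_⟩
  rcases n with _ | n
  · exact (htower 0).mono (by simp)
  · have h :=
      hc.of_semiconjBy hχ hc rfl hwpos (hw (n + 1 + 1) (by omega)).symm (htower (n + 1))
    rw [hχ.map_x (by omega)] at h
    exact h.mono (min_le_right _ _)

lemma exists_reachAbove_of_nonneg (hχ : IsChar χ) (hx1 : χ (x 1) ≠ 0)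
    (hx01 : χ (x 0) ≠ χ (x 1)) (hS : Subgroup.closure S = ⊤) :
    ∃ c, ∀ v, 0 ≤ χ v → ReachAbove χ S c 1 v := by
  obtain ⟨c, hc⟩ := exists_reachAbove_x_succ hχ hx01 hS
  refine ⟨c, fun v hv ↦ ?_⟩
  obtain ⟨p, q, hpq⟩ := ShiftsTail.exists_shiftsTail v
  obtain ⟨c', hv'⟩ := ReachAbove.exists_of_mem_closure hχ (hS ▸ Subgroup.mem_top v)
  have hsc : SemiconjBy v (x (p + 1)) (x (q + 1)) := by simpa using hpq 0
  have hp : χ (x (p + 1)) = χ (x 1) := hχ.map_x (by omega)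
  have hq : χ (x (q + 1)) = χ (x 1) := hχ.map_x (by omega)
  rcases hx1.lt_or_gt with hneg | hpos
  · have hp' := (hc p).inv hχ
    have hq' := (hc q).inv hχ
    rw [hp] at hp'
    rw [hq] at hq'
    have h := hq'.of_semiconjBy hχ hp' (by rw [char_inv hχ, char_inv hχ, hp, hq])
      (by rw [char_inv hχ, hq]; linarith) hsc.inv_right hv'
    exact h.mono (le_min (by linarith) (by linarith))
  · have h := (hc q).of_semiconjBy hχ (hc p) (by rw [hp, hq]) (by rw [hq]; exact hpos) hsc hv'
    exact h.mono (le_min le_rfl (by linarith))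

end Character

theorem kills_pbr_in_bns_general
    (χ : Fbr → ℝ) (hχ : IsChar χ)
    (hx1 : χ (x 1) ≠ 0) (hx01 : χ (x 0) ≠ χ (x 1))
    (S : Finset Fbr) (hS : Subgroup.closure (S : Set Fbr) = ⊤) :
    (cayleySubgraph S (fun g => 0 ≤ χ g)).Connected := by
  obtain ⟨σ, hσ, hσpos⟩ :=
    ReachAbove.exists_pos_of_mem_closure hχ (hS ▸ Subgroup.mem_top (x 1)) hx1
  obtain ⟨c, hc⟩ := exists_reachAbove_of_nonneg hχ hx1 hx01 hS
  exact connected_cayleySubgraph_of_reachAbove hχ hσ hσpos hc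

/-- Any character of `Fbr` killing `Pbr` whose `φ0`- and `φ1`-components are both nonzero
(equivalently, `χ(x 1) ≠ 0` and `χ(x 0) ≠ χ(x 1)`) lies in the BNS invariant `Σ¹(Fbr)`. -/
theorem kills_pbr_in_bns (π : Fbr →* ThF) (hπ : PiSpec π)
    (χ : Fbr → ℝ) (hχ : IsChar χ) (hker : ∀ g ∈ π.ker, χ g = 0)
    (hx1 : χ (x 1) ≠ 0) (hx01 : χ (x 0) ≠ χ (x 1))
    (S : Finset Fbr) (hS : Subgroup.closure (S : Set Fbr) = ⊤) :
    (cayleySubgraph S (fun g => 0 ≤ χ g)).Connected :=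
  kills_pbr_in_bns_general χ hχ hx1 hx01 S hS

end BrThompson
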